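/- arXiv:1410.2722 — 2 statements merged into one kernel-verified Lean document; each statement's English description precedes it below -/
import Mathlib

section
/- Let n ≥ 1, t > 0, and let A, B, C be positive reals satisfying A ≥ B²/n (corresponding to J(X) ≥ I(X)²/n). Then the function Λ(α) = α⁴ A + (1-α)⁴ n/t² + 2α²(1-α)² B/t is convex on [0,1]. -/
/-!
Write `c = n / t²` and `d = B / t`; the hypothesis `A ≥ B² / n` says `d² ≤ A c`. Then
`Λ(α) = A⁻¹ (A α² + d (1 - α)²)² + (c - d² / A) (1 - α)⁴`
is the square of a nonnegative convex function plus a nonnegative multiple of a convex one.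
-/

open Set

lemma Even.convexOn_one_sub_pow {n : ℕ} (hn : Even n) :
    ConvexOn ℝ univ fun x : ℝ => (1 - x) ^ n := by
  refine ((hn.convexOn_pow (𝕜 := ℝ)).translate_right (-1)).congr fun x _ => ?_
  rw [Function.comp_apply, ← hn.neg_pow, neg_add, neg_neg, ← sub_eq_add_neg]

lemma quartic_eq_sq_add (A c d x : ℝ) (hA : A ≠ 0) :
    x ^ 4 * A + (1 - x) ^ 4 * c + 2 * x ^ 2 * (1 - x) ^ 2 * d =
      A⁻¹ * (A * x ^ 2 + d * (1 - x) ^ 2) ^ 2 + (c - d ^ 2 / A) * (1 - x) ^ 4 := by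
  field_simp
  ring

lemma convexOn_quartic {A c d : ℝ} (hA : 0 < A) (hd : 0 ≤ d) (hdc : d ^ 2 ≤ A * c) :
    ConvexOn ℝ univ fun x : ℝ => x ^ 4 * A + (1 - x) ^ 4 * c + 2 * x ^ 2 * (1 - x) ^ 2 * d := by
  have hquad : ConvexOn ℝ univ fun x : ℝ => A * x ^ 2 + d * (1 - x) ^ 2 :=
    (even_two.convexOn_pow.smul hA.le).add (even_two.convexOn_one_sub_pow.smul hd)
  have hsq : ConvexOn ℝ univ fun x : ℝ => (A * x ^ 2 + d * (1 - x) ^ 2) ^ 2 :=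
    hquad.pow (fun x _ => by positivity) 2
  have hrem : 0 ≤ c - d ^ 2 / A := sub_nonneg.2 ((div_le_iff₀' hA).2 hdc)
  refine ((hsq.smul (inv_nonneg.2 hA.le)).add
    ((Even.convexOn_one_sub_pow (n := 4) ⟨2, rfl⟩).smul hrem)).congr fun x _ => ?_
  simp only [Pi.add_apply, smul_eq_mul, ← quartic_eq_sq_add A c d x hA.ne']

theorem Lambda_convex_general (n : ℕ) (hn : 1 ≤ n) (t : ℝ) (ht : 0 < t)
    (A B : ℝ) (hA : 0 < A) (hB : 0 < B)
    (hAB : A ≥ B ^ 2 / n) :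
    ConvexOn ℝ (Set.Icc (0 : ℝ) 1)
      (fun α : ℝ => α ^ 4 * A + (1 - α) ^ 4 * (n / t ^ 2) +
        2 * α ^ 2 * (1 - α) ^ 2 * (B / t)) := by
  have hn0 : (0 : ℝ) < n := by exact_mod_cast hn
  have hBA : B ^ 2 ≤ A * n := by rwa [ge_iff_le, div_le_iff₀ hn0] at hAB
  refine (convexOn_quartic hA (div_pos hB ht).le ?_).subset (subset_univ _) (convex_Icc 0 1)
  rwa [div_pow, mul_div_assoc', div_le_div_iff_of_pos_right (by positivity)]

/-- The function `Λ(α) = α⁴A + (1-α)⁴ n/t² + 2α²(1-α)² B/t` is convex on `[0,1]`,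
given `A ≥ B²/n`. -/
theorem Lambda_convex (n : ℕ) (hn : 1 ≤ n) (t : ℝ) (ht : 0 < t)
    (A B C : ℝ) (hA : 0 < A) (hB : 0 < B) (hC : 0 < C)
    (hAB : A ≥ B ^ 2 / n) :
    ConvexOn ℝ (Set.Icc (0 : ℝ) 1)
      (fun α : ℝ => α ^ 4 * A + (1 - α) ^ 4 * (n / t ^ 2) +
        2 * α ^ 2 * (1 - α) ^ 2 * (B / t)) :=
  Lambda_convex_general n hn t ht A B hA hB hAB
end

section
/- If positive reals I, J, K satisfy J ≥ I²/n and K ≥ 2J²/I, then K + I³/n² - 3IJ/n ≥ 0, with equality if and only if J = I²/n and K = 2J²/I. -/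
/-- If `J ≥ I²/n` and `K ≥ 2J²/I` then `K + I³/n² - 3IJ/n ≥ 0`,
with equality iff `J = I²/n` and `K = 2J²/I`. -/
theorem third_derivative_sign (n : ℕ) (hn : 1 ≤ n) (I J K : ℝ)
    (hI : 0 < I) (hJ : 0 < J) (hK : 0 < K)
    (hJI : J ≥ I ^ 2 / n) (hKJ : K ≥ 2 * J ^ 2 / I) :
    0 ≤ K + I ^ 3 / (n : ℝ) ^ 2 - 3 * I * J / n ∧
    (K + I ^ 3 / (n : ℝ) ^ 2 - 3 * I * J / n = 0 ↔
      J = I ^ 2 / n ∧ K = 2 * J ^ 2 / I) := by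
  have hn0 : (0 : ℝ) < n := by exact_mod_cast hn
  have hJI' : J * n ≥ I ^ 2 := by
    have := (div_le_iff₀ hn0).mp hJI
    linarith
  have hKJ' : K * I ≥ 2 * J ^ 2 := by
    have := (div_le_iff₀ hI).mp hKJ
    linarith
  have hA : (0 : ℝ) ≤ J * n - I ^ 2 := by linarith
  have hB : (0 : ℝ) < 2 * J * n - I ^ 2 := by nlinarith [mul_pos hJ hn0]
  have hrepr : K + I ^ 3 / (n : ℝ) ^ 2 - 3 * I * J / n
      = (K * I * n ^ 2 + I ^ 4 - 3 * I ^ 2 * J * n) / (I * n ^ 2) := by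
    field_simp
  have hprod : 0 ≤ K * I * (n : ℝ) ^ 2 + I ^ 4 - 3 * I ^ 2 * J * n := by
    nlinarith [mul_nonneg hA hB.le,
      mul_le_mul_of_nonneg_right hKJ' (sq_nonneg (n : ℝ))]
  have key : 0 ≤ K + I ^ 3 / (n : ℝ) ^ 2 - 3 * I * J / n := by
    rw [hrepr]; positivity
  refine ⟨key, ?_, ?_⟩
  · intro h
    have h1 : K * I * (n : ℝ) ^ 2 + I ^ 4 - 3 * I ^ 2 * J * n = 0 := by
      rw [hrepr] at h
      have := (div_eq_zero_iff.mp h).resolve_right (by positivity)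
      linarith
    have h2 : (J * n - I ^ 2) * (2 * J * n - I ^ 2) ≤ 0 := by
      nlinarith [mul_le_mul_of_nonneg_right hKJ' (sq_nonneg (n : ℝ))]
    have h4 : J * (n : ℝ) - I ^ 2 ≤ 0 := by
      by_contra hc
      push_neg at hc
      nlinarith [mul_pos hc hB]
    have h5 : J * (n : ℝ) = I ^ 2 := by linarith
    have hJeq : J = I ^ 2 / n := by field_simp; linarith
    have hKeq : K = 2 * J ^ 2 / I := by
      rw [eq_div_iff hI.ne']
      apply mul_left_cancel₀ (pow_ne_zero 2 hn0.ne')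
      linear_combination h1 + (I ^ 2 - 2 * (n : ℝ) * J) * h5
    exact ⟨hJeq, hKeq⟩
  · rintro ⟨h1, h2⟩
    subst h1 h2
    field_simp
    ring
end
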